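/- In ℝ², let K := {(x₁,x₂) ∈ ℝ² : x₁² + x₂² ≤ 1 and x₂ ≤ 5|x₁|} and Ω := B₂ ∖ K. Let s ∈ (0,1) be such that Per_s(K,ℝ²) > Per_s(B₁,ℝ²). Then Per_s(B₁,Ω) < min{ Per_s(K,Ω), Per_s(B₂,Ω) }. -/

import Mathlib

open MeasureTheory Filter
open scoped ENNReal NNReal

noncomputable section

/-- The fractional kernel `|x - y| ^ (-n - s)`. -/
def fracKernel (n : ℕ) (s : ℝ) (x y : EuclideanSpace ℝ (Fin n)) : ℝ :=
  dist x y ^ (-(n : ℝ) - s)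

/-- The cross-shaped domain `Q(Ω) = (ℝⁿ × ℝⁿ) \ (𝒞Ω × 𝒞Ω)`. -/
def crossQ (n : ℕ) (Ω : Set (EuclideanSpace ℝ (Fin n))) :
    Set (EuclideanSpace ℝ (Fin n) × EuclideanSpace ℝ (Fin n)) :=
  (Ωᶜ ×ˢ Ωᶜ)ᶜ

/-- The fractional `s`-perimeter `Per_s(E, Ω)` of `E` in `Ω`. -/
def fracPer (n : ℕ) (s : ℝ) (E Ω : Set (EuclideanSpace ℝ (Fin n))) : ℝ≥0∞ :=
  (1 / 2) * ∫⁻ p in crossQ n Ω,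
    ENNReal.ofReal
      (|Set.indicator E (fun _ => (1 : ℝ)) p.1 - Set.indicator E (fun _ => (1 : ℝ)) p.2| *
        fracKernel n s p.1 p.2)

/-- The set `K = {x₁² + x₂² ≤ 1 and x₂ ≤ 5|x₁|} ⊆ ℝ²`. -/
def Kset : Set (EuclideanSpace ℝ (Fin 2)) :=
  {x | x 0 ^ 2 + x 1 ^ 2 ≤ 1 ∧ x 1 ≤ 5 * |x 0|}

/-- The open unit ball `B₁ ⊆ ℝ²` centered at the origin. -/
def Bone : Set (EuclideanSpace ℝ (Fin 2)) := Metric.ball 0 1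

/-- The open ball `B₂ ⊆ ℝ²` of radius `2` centered at the origin. -/
def Btwo : Set (EuclideanSpace ℝ (Fin 2)) := Metric.ball 0 2

/-- The open set `Ω = B₂ \ K`. -/
def Ωex : Set (EuclideanSpace ℝ (Fin 2)) := Btwo \ Kset


/-!
`Per_s(E, ℝ²)` is `Per_s(E, Ω)` plus the interaction of `E` with itself inside `(ℝ² \ Ω)²`.
Off `Ω` the three sets `B₁`, `K`, `B₂` coincide up to the null circle `∂B₁`, so this interaction
term is the same for all of them and a strict inequality between global perimeters descends to
`Ω`. For `K` it is the hypothesis; for `B₂ = 2 • B₁` it follows from the scaling law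
`Per_s(r • E, ℝⁿ) = r ^ (n - s) Per_s(E, ℝⁿ)`, since `2 ^ (2 - s) > 1` and `0 < Per_s(B₁, ℝ²) < ∞`.
-/

open scoped Pointwise

def fracIntegrand (n : ℕ) (s : ℝ) (E : Set (EuclideanSpace ℝ (Fin n)))
    (p : EuclideanSpace ℝ (Fin n) × EuclideanSpace ℝ (Fin n)) : ℝ≥0∞ :=
  ENNReal.ofReal
    (|Set.indicator E (fun _ => (1 : ℝ)) p.1 - Set.indicator E (fun _ => (1 : ℝ)) p.2| *
      fracKernel n s p.1 p.2)

section FractionalPerimeter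

variable {n : ℕ} {s r : ℝ} {E F Ω : Set (EuclideanSpace ℝ (Fin n))}

theorem fracPer_eq_lintegral_fracIntegrand :
    fracPer n s E Ω = (1 / 2) * ∫⁻ p in crossQ n Ω, fracIntegrand n s E p := rfl

theorem crossQ_univ : crossQ n Set.univ = Set.univ := by
  simp [crossQ]

theorem measurable_fracIntegrand (hE : MeasurableSet E) : Measurable (fracIntegrand n s E) := by
  have hind : Measurable (Set.indicator E fun _ => (1 : ℝ)) := measurable_const.indicator hE
  refine Measurable.ennreal_ofReal (Measurable.mul ?_ ?_)
  · exact ((hind.comp measurable_fst).sub (hind.comp measurable_snd)).abs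
  · exact continuous_dist.measurable.pow_const _

theorem fracPer_univ_eq_add (hΩ : MeasurableSet Ω) :
    fracPer n s E Set.univ =
      fracPer n s E Ω + (1 / 2) * ∫⁻ p in Ωᶜ ×ˢ Ωᶜ, fracIntegrand n s E p := by
  rw [fracPer_eq_lintegral_fracIntegrand, fracPer_eq_lintegral_fracIntegrand, crossQ_univ,
    Measure.restrict_univ, ← lintegral_add_compl _ (hΩ.compl.prod hΩ.compl).compl, mul_add,
    crossQ, compl_compl]

theorem setLIntegral_fracIntegrand_congr (hΩ : MeasurableSet Ω)
    (hEF : ∀ᵐ x, x ∉ Ω → (x ∈ E ↔ x ∈ F)) :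
    ∫⁻ p in Ωᶜ ×ˢ Ωᶜ, fracIntegrand n s E p = ∫⁻ p in Ωᶜ ×ˢ Ωᶜ, fracIntegrand n s F p := by
  have h₁ : ∀ᵐ p : EuclideanSpace ℝ (Fin n) × EuclideanSpace ℝ (Fin n),
      p.1 ∉ Ω → (p.1 ∈ E ↔ p.1 ∈ F) := Measure.quasiMeasurePreserving_fst.ae hEF
  have h₂ : ∀ᵐ p : EuclideanSpace ℝ (Fin n) × EuclideanSpace ℝ (Fin n),
      p.2 ∉ Ω → (p.2 ∈ E ↔ p.2 ∈ F) := Measure.quasiMeasurePreserving_snd.ae hEF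
  refine setLIntegral_congr_fun_ae (hΩ.compl.prod hΩ.compl) ?_
  filter_upwards [h₁, h₂] with p hp₁ hp₂ ⟨hx, hy⟩
  classical
  simp only [fracIntegrand, Set.indicator_apply, hp₁ hx, hp₂ hy]

theorem fracPer_lt_fracPer_of_ae_mem_iff (hΩ : MeasurableSet Ω)
    (hEF : ∀ᵐ x, x ∉ Ω → (x ∈ E ↔ x ∈ F))
    (h : fracPer n s E Set.univ < fracPer n s F Set.univ) :
    fracPer n s E Ω < fracPer n s F Ω := by
  rw [fracPer_univ_eq_add hΩ, fracPer_univ_eq_add hΩ,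
    setLIntegral_fracIntegrand_congr hΩ hEF] at h
  exact lt_of_add_lt_add_right h

theorem fracPer_univ_pos (hE : MeasurableSet E) (h₁ : volume E ≠ 0) (h₂ : volume Eᶜ ≠ 0) :
    0 < fracPer n s E Set.univ := by
  have hsupp : Function.support (fracIntegrand n s E) ∩ E ×ˢ Eᶜ = E ×ˢ Eᶜ := by
    refine Set.inter_eq_right.2 fun p ⟨hp₁, hp₂⟩ => ?_
    have hne : p.1 ≠ p.2 := fun h => hp₂ (h ▸ hp₁)
    simp [fracIntegrand, Set.indicator_of_mem hp₁, Set.indicator_of_notMem hp₂, fracKernel,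
      Real.rpow_pos_of_pos (dist_pos.2 hne)]
  have hpos : 0 < ∫⁻ p in E ×ˢ Eᶜ, fracIntegrand n s E p := by
    rw [setLIntegral_pos_iff (measurable_fracIntegrand hE), hsupp, Measure.volume_eq_prod,
      Measure.prod_prod]
    exact pos_iff_ne_zero.2 (mul_ne_zero h₁ h₂)
  rw [fracPer_eq_lintegral_fracIntegrand, crossQ_univ, Measure.restrict_univ]
  exact ENNReal.mul_pos (by norm_num) (hpos.trans_le (setLIntegral_le_lintegral _ _)).ne'

theorem fracIntegrand_smul_smul (hr : 0 < r)
    (p : EuclideanSpace ℝ (Fin n) × EuclideanSpace ℝ (Fin n)) :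
    fracIntegrand n s (r • E) (r • p) =
      ENNReal.ofReal (r ^ (-(n : ℝ) - s)) * fracIntegrand n s E p := by
  classical
  have hkernel :
      fracKernel n s (r • p.1) (r • p.2) = r ^ (-(n : ℝ) - s) * fracKernel n s p.1 p.2 := by
    rw [fracKernel, fracKernel, dist_smul₀, Real.norm_of_nonneg hr.le,
      Real.mul_rpow hr.le dist_nonneg]
  rw [fracIntegrand, fracIntegrand, ← ENNReal.ofReal_mul (by positivity), Prod.smul_fst,
    Prod.smul_snd, hkernel]
  simp only [Set.indicator_apply, Set.smul_mem_smul_set_iff₀ hr.ne']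
  ring_nf

/-- The exponent is `2n` from the Jacobian of `p ↦ r • p` on `ℝⁿ × ℝⁿ` plus `-n - s` from the
kernel. -/
theorem fracPer_smul_univ (hr : 0 < r) :
    fracPer n s (r • E) Set.univ =
      ENNReal.ofReal (r ^ ((n : ℝ) - s)) * fracPer n s E Set.univ := by
  have : Measure.IsAddHaarMeasure
      (volume : Measure (EuclideanSpace ℝ (Fin n) × EuclideanSpace ℝ (Fin n))) :=
    Measure.prod.instIsAddHaarMeasure _ _
  have hmap : Measure.map (r • ·)
      (volume : Measure (EuclideanSpace ℝ (Fin n) × EuclideanSpace ℝ (Fin n))) =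
        ENNReal.ofReal (r ^ (n + n))⁻¹ • volume := by
    rw [Measure.map_addHaar_smul volume hr.ne', Module.finrank_prod, finrank_euclideanSpace_fin,
      abs_of_pos (by positivity)]
  have hcov := lintegral_map_equiv (μ := volume) (fracIntegrand n s (r • E))
    (MeasurableEquiv.smul₀ r hr.ne')
  simp only [MeasurableEquiv.coe_smul₀, hmap, lintegral_smul_measure,
    fracIntegrand_smul_smul hr, lintegral_const_mul' _ _ ENNReal.ofReal_ne_top] at hcov
  have hinv : ENNReal.ofReal (r ^ (n + n)) * ENNReal.ofReal (r ^ (n + n))⁻¹ = 1 := by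
    rw [← ENNReal.ofReal_mul (by positivity), mul_inv_cancel₀ (by positivity), ENNReal.ofReal_one]
  have hexp : r ^ (n + n) * r ^ (-(n : ℝ) - s) = r ^ ((n : ℝ) - s) := by
    rw [← Real.rpow_natCast, ← Real.rpow_add hr]
    push_cast
    ring_nf
  have key : ∫⁻ p, fracIntegrand n s (r • E) p
      = ENNReal.ofReal (r ^ ((n : ℝ) - s)) * ∫⁻ p, fracIntegrand n s E p := by
    rw [← one_mul (∫⁻ p, _), ← hinv, mul_assoc, ← smul_eq_mul (a := ENNReal.ofReal _⁻¹), hcov,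
      ← mul_assoc, ← ENNReal.ofReal_mul (by positivity), hexp]
  rw [fracPer_eq_lintegral_fracIntegrand, fracPer_eq_lintegral_fracIntegrand, crossQ_univ,
    Measure.restrict_univ, key, mul_left_comm]

theorem fracPer_univ_lt_smul (hpos : 0 < fracPer n s E Set.univ)
    (hfin : fracPer n s E Set.univ ≠ ⊤) (hr : 1 < r) (hs : s < n) :
    fracPer n s E Set.univ < fracPer n s (r • E) Set.univ := by
  have hfactor : 1 < ENNReal.ofReal (r ^ ((n : ℝ) - s)) :=
    ENNReal.one_lt_ofReal.2 (Real.one_lt_rpow hr (sub_pos.2 hs))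
  rw [fracPer_smul_univ (zero_lt_one.trans hr)]
  calc fracPer n s E Set.univ = 1 * fracPer n s E Set.univ := (one_mul _).symm
    _ < _ := (ENNReal.mul_lt_mul_iff_left hpos.ne' hfin).2 hfactor

end FractionalPerimeter

theorem norm_le_one_of_mem_Kset {x : EuclideanSpace ℝ (Fin 2)} (hx : x ∈ Kset) : ‖x‖ ≤ 1 := by
  rw [EuclideanSpace.norm_eq, Fin.sum_univ_two, Real.norm_eq_abs, Real.norm_eq_abs, sq_abs, sq_abs]
  exact Real.sqrt_le_one.2 hx.1

theorem measurableSet_Kset : MeasurableSet Kset := by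
  have h₀ : Continuous fun x : EuclideanSpace ℝ (Fin 2) => x 0 := by fun_prop
  have h₁ : Continuous fun x : EuclideanSpace ℝ (Fin 2) => x 1 := by fun_prop
  exact (isClosed_le ((h₀.pow 2).add (h₁.pow 2)) continuous_const).measurableSet.inter
    (isClosed_le h₁ (continuous_const.mul h₀.abs)).measurableSet

theorem measurableSet_Ωex : MeasurableSet Ωex :=
  measurableSet_ball.diff measurableSet_Kset

theorem mem_Btwo_iff_mem_Kset_of_notMem_Ωex {x : EuclideanSpace ℝ (Fin 2)} (hx : x ∉ Ωex) :
    x ∈ Btwo ↔ x ∈ Kset := by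
  refine ⟨fun hB => by_contra fun hK => hx ⟨hB, hK⟩, fun hK => ?_⟩
  rw [Btwo, mem_ball_zero_iff]
  linarith [norm_le_one_of_mem_Kset hK]

theorem mem_Bone_iff_mem_Kset_of_notMem_Ωex {x : EuclideanSpace ℝ (Fin 2)} (hx : x ∉ Ωex)
    (hx₁ : ‖x‖ ≠ 1) : x ∈ Bone ↔ x ∈ Kset := by
  refine ⟨fun hB => (mem_Btwo_iff_mem_Kset_of_notMem_Ωex hx).1 ?_, fun hK => ?_⟩
  · exact Metric.ball_subset_ball one_le_two hB
  · exact mem_ball_zero_iff.2 ((norm_le_one_of_mem_Kset hK).lt_of_ne hx₁)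

theorem ae_mem_Bone_iff_mem_Kset :
    ∀ᵐ x : EuclideanSpace ℝ (Fin 2), x ∉ Ωex → (x ∈ Bone ↔ x ∈ Kset) := by
  have hsphere : ∀ᵐ x : EuclideanSpace ℝ (Fin 2), x ∉ Metric.sphere 0 1 :=
    measure_eq_zero_iff_ae_notMem.1 (Measure.addHaar_sphere volume 0 1)
  filter_upwards [hsphere] with x hx₁ hx
  exact mem_Bone_iff_mem_Kset_of_notMem_Ωex hx (by simpa using hx₁)

theorem Btwo_eq_smul_Bone : Btwo = (2 : ℝ) • Bone := by
  rw [Bone, smul_unitBall two_ne_zero, Real.norm_ofNat, Btwo]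

theorem fracPer_Bone_univ_pos (s : ℝ) : 0 < fracPer 2 s Bone Set.univ := by
  refine fracPer_univ_pos measurableSet_ball (Metric.measure_ball_pos _ _ one_pos).ne' ?_
  unfold Bone
  rw [measure_compl measurableSet_ball measure_ball_lt_top.ne,
    measure_univ_of_isAddLeftInvariant, ENNReal.top_sub measure_ball_lt_top.ne]
  exact ENNReal.top_ne_zero

theorem sPerimeter_strict_comparison (s : ℝ) (hs : s ∈ Set.Ioo (0 : ℝ) 1)
    (hper : fracPer 2 s Bone Set.univ < fracPer 2 s Kset Set.univ) :
    fracPer 2 s Bone Ωex < min (fracPer 2 s Kset Ωex) (fracPer 2 s Btwo Ωex) := by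
  have hBtwo : fracPer 2 s Bone Set.univ < fracPer 2 s Btwo Set.univ := by
    rw [Btwo_eq_smul_Bone]
    exact fracPer_univ_lt_smul (fracPer_Bone_univ_pos s) hper.ne_top one_lt_two
      (by norm_num; linarith [hs.2])
  have hBone_Btwo : ∀ᵐ x : EuclideanSpace ℝ (Fin 2), x ∉ Ωex → (x ∈ Bone ↔ x ∈ Btwo) := by
    filter_upwards [ae_mem_Bone_iff_mem_Kset] with x hx hxΩ
    rw [hx hxΩ, mem_Btwo_iff_mem_Kset_of_notMem_Ωex hxΩ]
  exact lt_min (fracPer_lt_fracPer_of_ae_mem_iff measurableSet_Ωex ae_mem_Bone_iff_mem_Kset hper)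
    (fracPer_lt_fracPer_of_ae_mem_iff measurableSet_Ωex hBone_Btwo hBtwo)

end
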